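/- Let 𝒜 = {A_1, …, A_r} be an irreducible finite set of real m×m matrices, let ρ ≥ 0, and let p be a seminorm on ℝ^m that is not identically zero and satisfies the Barabanov condition ρ·p(x) = max_{1≤i≤r} p(A_i x) for all x ∈ ℝ^m. Then p is a norm on ℝ^m and ρ = ρ(𝒜); in particular p is a Barabanov norm for 𝒜. -/

import Mathlib

/-! The null space `{x | p x = 0}` of a seminorm with `p (A i x) ≤ ρ p x` is a common invariant
subspace, so by irreducibility it is trivial and `p` is a norm, comparable to the sup norm.
Iterating the Barabanov condition gives `p (W x) ≤ ρ ^ n p x` for every product `W` of `n`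
matrices of the family, with equality for a suitable `W` chosen greedily, so the largest operator
norm of such products lies between two constant multiples of `ρ ^ n`, and its `n`-th root
tends to `ρ`. -/

open Matrix Filter Topology Bornology Pointwise

/-- `N` is a norm on `ℝ^m`: nonnegative, definite, absolutely homogeneous, subadditive. -/
def IsNorm {m : ℕ} (N : (Fin m → ℝ) → ℝ) : Prop :=
  (∀ x, 0 ≤ N x) ∧ (∀ x, N x = 0 → x = 0) ∧
    (∀ (t : ℝ) (x), N (t • x) = |t| * N x) ∧ (∀ x y, N (x + y) ≤ N x + N y)

/-- `N` is a seminorm on `ℝ^m`. -/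
def IsSeminorm {m : ℕ} (N : (Fin m → ℝ) → ℝ) : Prop :=
  (∀ x, 0 ≤ N x) ∧
    (∀ (t : ℝ) (x), N (t • x) = |t| * N x) ∧ (∀ x y, N (x + y) ≤ N x + N y)

/-- The family `A` is irreducible: the matrices have no common invariant subspace
other than `⊥` and `⊤`. -/
def IsIrreducibleFamily {m r : ℕ} (A : Fin r → Matrix (Fin m) (Fin m) ℝ) : Prop :=
  ∀ W : Submodule ℝ (Fin m → ℝ), (∀ i, ∀ x ∈ W, (A i).mulVec x ∈ W) → W = ⊥ ∨ W = ⊤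

/-- The operator norm of a matrix acting on `ℝ^m` (with its sup norm). -/
noncomputable def matNorm {m : ℕ} (M : Matrix (Fin m) (Fin m) ℝ) : ℝ :=
  ‖LinearMap.toContinuousLinearMap M.mulVecLin‖

/-- The joint spectral radius of the family `A`:
`limsup_n (max over words of length n of the norm of the product)^(1/n)`. -/
noncomputable def jsr {m r : ℕ} (A : Fin r → Matrix (Fin m) (Fin m) ℝ) : ℝ :=
  Filter.atTop.limsup fun n : ℕ =>
    (⨆ w : Fin n → Fin r, matNorm (List.ofFn fun k => A (w k)).prod) ^ (1 / (n : ℝ))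

/-- `maxA A N x = max_i N (A_i x)`. -/
noncomputable def maxA {m r : ℕ} (A : Fin r → Matrix (Fin m) (Fin m) ℝ)
    (N : (Fin m → ℝ) → ℝ) (x : Fin m → ℝ) : ℝ :=
  ⨆ i, N ((A i).mulVec x)

/-- `ρ⁺ = max_{x ≠ 0} (max_i N (A_i x)) / N x`. -/
noncomputable def rhoSup {m r : ℕ} (A : Fin r → Matrix (Fin m) (Fin m) ℝ)
    (N : (Fin m → ℝ) → ℝ) : ℝ :=
  sSup ((fun x => maxA A N x / N x) '' {x | x ≠ 0})

/-- `ρ⁻ = min_{x ≠ 0} (max_i N (A_i x)) / N x`. -/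
noncomputable def rhoInf {m r : ℕ} (A : Fin r → Matrix (Fin m) (Fin m) ℝ)
    (N : (Fin m → ℝ) → ℝ) : ℝ :=
  sInf ((fun x => maxA A N x / N x) '' {x | x ≠ 0})

/-- An averaging function: continuous on positives, `γ t t = t`, and strictly
between `min` and `max` off the diagonal. -/
def IsAveraging (γ : ℝ → ℝ → ℝ) : Prop :=
  ContinuousOn (fun p : ℝ × ℝ => γ p.1 p.2) {p | 0 < p.1 ∧ 0 < p.2} ∧
    (∀ t, 0 < t → γ t t = t) ∧
    ∀ t s, 0 < t → 0 < s → t ≠ s → min t s < γ t s ∧ γ t s < max t s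

/-- The max-relaxation iteration: `‖x‖_{n+1} = max (‖x‖_n, γ_n⁻¹ max_i ‖A_i x‖_n)`
where `γ_n = γ (ρ⁻_n, ρ⁺_n)`. -/
noncomputable def iterN {m r : ℕ} (A : Fin r → Matrix (Fin m) (Fin m) ℝ)
    (γ : ℝ → ℝ → ℝ) (N0 : (Fin m → ℝ) → ℝ) : ℕ → (Fin m → ℝ) → ℝ
  | 0 => N0
  | n + 1 => fun x =>
      max (iterN A γ N0 n x)
        ((γ (rhoInf A (iterN A γ N0 n)) (rhoSup A (iterN A γ N0 n)))⁻¹ *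
          maxA A (iterN A γ N0 n) x)

/-- The normalized norms `‖x‖°_n = ‖x‖_n / ‖e‖_n` of the max-relaxation iteration
(for `n = 0` this equals `‖x‖_0` since `‖e‖_0 = 1`). -/
noncomputable def iterNnorm {m r : ℕ} (A : Fin r → Matrix (Fin m) (Fin m) ℝ)
    (γ : ℝ → ℝ → ℝ) (N0 : (Fin m → ℝ) → ℝ) (e : Fin m → ℝ) (n : ℕ) :
    (Fin m → ℝ) → ℝ :=
  fun x => iterN A γ N0 n x / iterN A γ N0 n e

/-- `e⁺(N, N') = max_{x ≠ 0} N x / N' x`. -/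
noncomputable def ePlus {m : ℕ} (N N' : (Fin m → ℝ) → ℝ) : ℝ :=
  sSup ((fun x => N x / N' x) '' {x | x ≠ 0})

/-- `e⁻(N, N') = min_{x ≠ 0} N x / N' x`. -/
noncomputable def eMinus {m : ℕ} (N N' : (Fin m → ℝ) → ℝ) : ℝ :=
  sInf ((fun x => N x / N' x) '' {x | x ≠ 0})

/-- The eccentricity of the norm `N` with respect to the norm `N'`. -/
noncomputable def ecc {m : ℕ} (N N' : (Fin m → ℝ) → ℝ) : ℝ :=
  ePlus N N' / eMinus N N'

namespace IsSeminorm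

variable {m : ℕ} {p : (Fin m → ℝ) → ℝ}

def toSeminorm (hp : IsSeminorm p) : Seminorm ℝ (Fin m → ℝ) where
  toFun := p
  map_zero' := by simpa using hp.2.1 0 0
  add_le' := hp.2.2
  neg' x := by simpa using hp.2.1 (-1) x
  smul' t x := hp.2.1 t x

lemma continuous (hp : IsSeminorm p) : Continuous p :=
  hp.toSeminorm.convexOn.locallyLipschitz.continuous

lemma exists_le_mul_norm (hp : IsSeminorm p) : ∃ C, 0 < C ∧ ∀ x, p x ≤ C * ‖x‖ :=
  hp.toSeminorm.bound_of_continuous_normedSpace hp.continuous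

lemma exists_mul_norm_le (hp : IsSeminorm p) (hdef : ∀ x, p x = 0 → x = 0) :
    ∃ c, 0 < c ∧ ∀ x, c * ‖x‖ ≤ p x := by
  rcases subsingleton_or_nontrivial (Fin m → ℝ) with _ | _
  · exact ⟨1, one_pos, fun x => by simp [Subsingleton.elim x 0, hp.1]⟩
  obtain ⟨z, hz, hmin⟩ := (isCompact_sphere (0 : Fin m → ℝ) 1).exists_isMinOn
    (NormedSpace.sphere_nonempty.2 zero_le_one) hp.continuous.continuousOn
  have hz0 : z ≠ 0 := ne_zero_of_mem_sphere one_ne_zero ⟨z, hz⟩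
  refine ⟨p z, (hp.1 z).lt_of_ne fun h => hz0 (hdef z h.symm), fun x => ?_⟩
  rcases eq_or_ne x 0 with rfl | hx
  · simp [hp.1]
  have hx' : 0 < ‖x‖ := norm_pos_iff.2 hx
  have hmin : p z ≤ ‖x‖⁻¹ * p x := by
    simpa [hp.2.1, abs_of_pos hx'] using
      hmin (a := ‖x‖⁻¹ • x) (by simp [norm_smul, hx'.ne'])
  calc p z * ‖x‖ ≤ ‖x‖⁻¹ * p x * ‖x‖ := by gcongr
    _ = p x := by field_simp

def nullSpace (hp : IsSeminorm p) : Submodule ℝ (Fin m → ℝ) where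
  carrier := {x | p x = 0}
  add_mem' {x y} (hx : p x = 0) (hy : p y = 0) :=
    le_antisymm (by simpa [hx, hy] using hp.2.2 x y) (hp.1 _)
  zero_mem' := map_zero hp.toSeminorm
  smul_mem' t x hx := by simp_all [hp.2.1]

lemma isNorm_of_irreducible {r : ℕ} {A : Fin r → Matrix (Fin m) (Fin m) ℝ}
    (hA : IsIrreducibleFamily A) (hp : IsSeminorm p) (hne : ∃ x, p x ≠ 0) {ρ : ℝ}
    (hle : ∀ i x, p (A i *ᵥ x) ≤ ρ * p x) : IsNorm p := by
  have hinv : ∀ i, ∀ x ∈ hp.nullSpace, A i *ᵥ x ∈ hp.nullSpace := fun i x hx =>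
    le_antisymm (by simpa [show p x = 0 from hx] using hle i x) (hp.1 _)
  refine ⟨hp.1, fun x hx => ?_, hp.2.1, hp.2.2⟩
  obtain ⟨x₀, hx₀⟩ := hne
  rcases hA _ hinv with h | h
  · simpa [h] using (show x ∈ hp.nullSpace from hx)
  · exact absurd (show x₀ ∈ hp.nullSpace from h ▸ Submodule.mem_top) hx₀

end IsSeminorm

section Words

variable {m r : ℕ} (A : Fin r → Matrix (Fin m) (Fin m) ℝ)

def wordProd {n : ℕ} (w : Fin n → Fin r) : Matrix (Fin m) (Fin m) ℝ :=
  (List.ofFn fun k => A (w k)).prod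

lemma wordProd_cons {n : ℕ} (i : Fin r) (w : Fin n → Fin r) :
    wordProd A (Fin.cons i w : Fin (n + 1) → Fin r) = A i * wordProd A w := by
  simp [wordProd, List.ofFn_succ]

variable {A} {p : (Fin m → ℝ) → ℝ} {ρ : ℝ}

lemma apply_wordProd_mulVec_le (hρ : 0 ≤ ρ) (hle : ∀ i x, p (A i *ᵥ x) ≤ ρ * p x)
    {n : ℕ} (w : Fin n → Fin r) (x : Fin m → ℝ) : p (wordProd A w *ᵥ x) ≤ ρ ^ n * p x := by
  induction n with
  | zero => simp [wordProd]
  | succ n ih =>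
    rw [← Fin.cons_self_tail w, wordProd_cons, ← mulVec_mulVec, pow_succ', mul_assoc]
    exact (hle _ _).trans (mul_le_mul_of_nonneg_left (ih _) hρ)

lemma exists_apply_wordProd_mulVec_eq (hex : ∀ x, ∃ i, p (A i *ᵥ x) = ρ * p x)
    (n : ℕ) (x : Fin m → ℝ) : ∃ w : Fin n → Fin r, p (wordProd A w *ᵥ x) = ρ ^ n * p x := by
  induction n with
  | zero => exact ⟨Fin.elim0, by simp [wordProd]⟩
  | succ n ih =>
    obtain ⟨w, hw⟩ := ih
    obtain ⟨i, hi⟩ := hex (wordProd A w *ᵥ x)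
    exact ⟨Fin.cons i w, by rw [wordProd_cons, ← mulVec_mulVec, hi, hw, pow_succ', mul_assoc]⟩

end Words

lemma le_maxA {m r : ℕ} (A : Fin r → Matrix (Fin m) (Fin m) ℝ) (N : (Fin m → ℝ) → ℝ)
    (i : Fin r) (x : Fin m → ℝ) : N (A i *ᵥ x) ≤ maxA A N x :=
  le_ciSup (f := fun i => N (A i *ᵥ x)) (Set.finite_range _).bddAbove i

lemma exists_eq_maxA {m r : ℕ} [Nonempty (Fin r)] (A : Fin r → Matrix (Fin m) (Fin m) ℝ)
    (N : (Fin m → ℝ) → ℝ) (x : Fin m → ℝ) : ∃ i, N (A i *ᵥ x) = maxA A N x :=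
  exists_eq_ciSup_of_finite

lemma norm_mulVec_le_matNorm {m : ℕ} (M : Matrix (Fin m) (Fin m) ℝ) (x : Fin m → ℝ) :
    ‖M *ᵥ x‖ ≤ matNorm M * ‖x‖ :=
  (LinearMap.toContinuousLinearMap M.mulVecLin).le_opNorm x

lemma matNorm_le_of_norm_mulVec_le {m : ℕ} {M : Matrix (Fin m) (Fin m) ℝ} {b : ℝ} (hb : 0 ≤ b)
    (h : ∀ x, ‖M *ᵥ x‖ ≤ b * ‖x‖) : matNorm M ≤ b :=
  ContinuousLinearMap.opNorm_le_bound _ hb h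

lemma tendsto_const_mul_pow_rpow_one_div {ρ K : ℝ} (hρ : 0 ≤ ρ) (hK : 0 < K) :
    Tendsto (fun n : ℕ => (K * ρ ^ n) ^ (1 / (n : ℝ))) atTop (𝓝 ρ) := by
  have hK1 : Tendsto (fun n : ℕ => K ^ (1 / (n : ℝ))) atTop (𝓝 1) := by
    simpa using tendsto_const_nhds.rpow tendsto_one_div_atTop_nhds_zero_nat (Or.inl hK.ne')
  refine (one_mul ρ ▸ hK1.mul_const ρ).congr' ?_
  filter_upwards [eventually_ne_atTop 0] with n hn
  rw [Real.mul_rpow hK.le (pow_nonneg hρ n), ← Real.rpow_natCast, ← Real.rpow_mul hρ,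
    mul_one_div_cancel (Nat.cast_ne_zero.2 hn), Real.rpow_one]

lemma tendsto_rpow_one_div_of_pow_bounds {g : ℕ → ℝ} {ρ a b : ℝ} (hρ : 0 ≤ ρ) (ha : 0 < a)
    (hb : 0 < b) (hlow : ∀ n, a * ρ ^ n ≤ g n) (hup : ∀ n, g n ≤ b * ρ ^ n) :
    Tendsto (fun n : ℕ => g n ^ (1 / (n : ℝ))) atTop (𝓝 ρ) :=
  tendsto_of_tendsto_of_tendsto_of_le_of_le (tendsto_const_mul_pow_rpow_one_div hρ ha)
    (tendsto_const_mul_pow_rpow_one_div hρ hb)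
    (fun n => Real.rpow_le_rpow (by positivity) (hlow n) (by positivity))
    (fun n => Real.rpow_le_rpow ((by positivity : 0 ≤ a * ρ ^ n).trans (hlow n)) (hup n)
      (by positivity))

section JointSpectralRadius

variable {m r : ℕ} {A : Fin r → Matrix (Fin m) (Fin m) ℝ} {p : (Fin m → ℝ) → ℝ} {ρ c C : ℝ}

lemma iSup_matNorm_wordProd_le (hρ : 0 ≤ ρ) (hle : ∀ i x, p (A i *ᵥ x) ≤ ρ * p x)
    (hc : 0 < c) (hC : 0 < C) (hlow : ∀ x, c * ‖x‖ ≤ p x) (hup : ∀ x, p x ≤ C * ‖x‖)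
    (n : ℕ) : ⨆ w : Fin n → Fin r, matNorm (wordProd A w) ≤ C / c * ρ ^ n := by
  have hb : 0 ≤ C / c * ρ ^ n := by positivity
  refine Real.iSup_le (fun w => matNorm_le_of_norm_mulVec_le hb fun x => ?_) hb
  have key : c * ‖wordProd A w *ᵥ x‖ ≤ c * (C / c * ρ ^ n * ‖x‖) :=
    calc c * ‖wordProd A w *ᵥ x‖ ≤ p (wordProd A w *ᵥ x) := hlow _
      _ ≤ ρ ^ n * p x := apply_wordProd_mulVec_le hρ hle w x
      _ ≤ ρ ^ n * (C * ‖x‖) := mul_le_mul_of_nonneg_left (hup x) (pow_nonneg hρ n)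
      _ = c * (C / c * ρ ^ n * ‖x‖) := by field_simp
  exact le_of_mul_le_mul_left key hc

lemma le_iSup_matNorm_wordProd (hex : ∀ x, ∃ i, p (A i *ᵥ x) = ρ * p x) (hC : 0 < C)
    (hup : ∀ x, p x ≤ C * ‖x‖) {x₀ : Fin m → ℝ} (hx₀ : x₀ ≠ 0) (n : ℕ) :
    p x₀ / (C * ‖x₀‖) * ρ ^ n ≤ ⨆ w : Fin n → Fin r, matNorm (wordProd A w) := by
  obtain ⟨w, hw⟩ := exists_apply_wordProd_mulVec_eq hex n x₀
  have hx₀' : 0 < ‖x₀‖ := norm_pos_iff.2 hx₀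
  have key : ρ ^ n * p x₀ ≤ C * ‖x₀‖ * matNorm (wordProd A w) :=
    calc ρ ^ n * p x₀ = p (wordProd A w *ᵥ x₀) := hw.symm
      _ ≤ C * ‖wordProd A w *ᵥ x₀‖ := hup _
      _ ≤ C * (matNorm (wordProd A w) * ‖x₀‖) :=
        mul_le_mul_of_nonneg_left (norm_mulVec_le_matNorm _ _) hC.le
      _ = C * ‖x₀‖ * matNorm (wordProd A w) := by ring
  calc p x₀ / (C * ‖x₀‖) * ρ ^ n ≤ matNorm (wordProd A w) := by
        rw [div_mul_eq_mul_div, div_le_iff₀ (by positivity)]; linarith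
    _ ≤ _ := le_ciSup (f := fun w : Fin n → Fin r => matNorm (wordProd A w))
        (Set.finite_range _).bddAbove w

end JointSpectralRadius

theorem stmt19_general {m r : ℕ} (hr : 1 ≤ r)
    (A : Fin r → Matrix (Fin m) (Fin m) ℝ) (hA : IsIrreducibleFamily A)
    (p : (Fin m → ℝ) → ℝ) (hp : IsSeminorm p) (hne : ∃ x, p x ≠ 0)
    (ρ : ℝ) (hρ : 0 ≤ ρ)
    (hbar : ∀ x, ρ * p x = maxA A p x) :
    IsNorm p ∧ ρ = jsr A := by
  have : Nonempty (Fin r) := ⟨⟨0, hr⟩⟩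
  have hle : ∀ i x, p (A i *ᵥ x) ≤ ρ * p x := fun i x => hbar x ▸ le_maxA A p i x
  have hex : ∀ x, ∃ i, p (A i *ᵥ x) = ρ * p x := fun x => hbar x ▸ exists_eq_maxA A p x
  have hnorm : IsNorm p := hp.isNorm_of_irreducible hA hne hle
  obtain ⟨C, hC, hup⟩ := hp.exists_le_mul_norm
  obtain ⟨c, hc, hlow⟩ := hp.exists_mul_norm_le hnorm.2.1
  obtain ⟨x₀, hx₀⟩ := hne
  have hx₀0 : x₀ ≠ 0 := by rintro rfl; exact hx₀ (map_zero hp.toSeminorm)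
  have hpx₀ : 0 < p x₀ := (hp.1 x₀).lt_of_ne' hx₀
  have hnx₀ : 0 < ‖x₀‖ := norm_pos_iff.2 hx₀0
  exact ⟨hnorm, (tendsto_rpow_one_div_of_pow_bounds hρ (by positivity) (by positivity)
    (le_iSup_matNorm_wordProd hex hC hup hx₀0) (iSup_matNorm_wordProd_le hρ hle hc hC hlow hup)
    ).limsup_eq.symm⟩

/-- a not identically zero seminorm `p` satisfying the Barabanov condition
`ρ p x = max_i p (A_i x)` for an irreducible family is a norm, and `ρ = ρ(𝒜)`;
in particular `p` is a Barabanov norm for `𝒜`. -/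
theorem stmt19 {m r : ℕ} (hm : 2 ≤ m) (hr : 1 ≤ r)
    (A : Fin r → Matrix (Fin m) (Fin m) ℝ) (hA : IsIrreducibleFamily A)
    (p : (Fin m → ℝ) → ℝ) (hp : IsSeminorm p) (hne : ∃ x, p x ≠ 0)
    (ρ : ℝ) (hρ : 0 ≤ ρ)
    (hbar : ∀ x, ρ * p x = maxA A p x) :
    IsNorm p ∧ ρ = jsr A :=
  stmt19_general hr A hA p hp hne ρ hρ hbar
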